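/- For z on the unit circle with z ≠ ±1, if a sequence (ζ_n) of unit complex numbers satisfies ζ_{n+1} = zζ_n(1 + 2i·Im(w_n ζ_n)) + E_n with |w_n| ≤ λ and |E_n| ≤ Cλ², then |(1/N)·Σ_{n=1}^N ζ_n| ≤ C'λ/|1 - z| + 3/(N|1-z|) for a constant C' depending only on C. -/

import Mathlib

open Complex Finset

/-- For `z` on the unit circle with `z ≠ 1`, if unit complex numbers `ζ_n` satisfy
`ζ_{n+1} = z ζ_n (1 + 2i Im(w_n ζ_n)) + E_n` with `|w_n| ≤ lam` and `|E_n| ≤ Clam²`,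
then `|(1/N) Σ_{n=1}^N ζ_n| ≤ C'lam/|1-z| + 3/(N|1-z|)` where `C'` depends only on `C`. -/
theorem prufer_phase_average_bound :
    ∀ C : ℝ, 0 < C → ∃ C' : ℝ, 0 < C' ∧
      ∀ (z : ℂ), ‖z‖ = 1 → z ≠ 1 →
      ∀ (lam : ℝ), 0 ≤ lam → lam ≤ 1 →
      ∀ (ζ w E : ℕ → ℂ),
        (∀ n, 1 ≤ n → ‖ζ n‖ = 1) →
        (∀ n, 1 ≤ n → ‖w n‖ ≤ lam) →
        (∀ n, 1 ≤ n → ‖E n‖ ≤ C * lam ^ 2) →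
        (∀ n, 1 ≤ n → ζ (n + 1)
          = z * ζ n * (1 + 2 * Complex.I * ((w n * ζ n).im : ℂ)) + E n) →
        ∀ N : ℕ, 1 ≤ N →
          ‖(1 / (N : ℂ)) * ∑ n ∈ Finset.Icc 1 N, ζ n‖
            ≤ C' * lam / ‖1 - z‖ + 3 / ((N : ℝ) * ‖1 - z‖) := by
  intro C hC
  refine ⟨C + 2, by linarith, ?_⟩
  intro z hz hz1 lam hlam0 hlam1 ζ w E hζ hw hE hrec N hN
  have hz0 : 0 < ‖1 - z‖ := by
    rw [norm_pos_iff]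
    intro h
    exact hz1 (sub_eq_zero.mp h).symm
  have hNpos : (0:ℝ) < N := by exact_mod_cast hN
  -- step bound
  have hstep : ∀ n, 1 ≤ n → ‖ζ (n+1) - z * ζ n‖ ≤ (C + 2) * lam := by
    intro n hn
    have h1 : ζ (n+1) - z * ζ n = z * ζ n * (2 * Complex.I * ((w n * ζ n).im : ℂ)) + E n := by
      rw [hrec n hn]; ring
    rw [h1]
    have hIm : |(w n * ζ n).im| ≤ lam := by
      calc |(w n * ζ n).im| ≤ ‖w n * ζ n‖ := Complex.abs_im_le_norm _
        _ = ‖w n‖ * ‖ζ n‖ := norm_mul _ _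
        _ ≤ lam := by rw [hζ n hn, mul_one]; exact hw n hn
    calc ‖z * ζ n * (2 * Complex.I * ((w n * ζ n).im : ℂ)) + E n‖
        ≤ ‖z * ζ n * (2 * Complex.I * ((w n * ζ n).im : ℂ))‖
          + ‖E n‖ := norm_add_le _ _
      _ ≤ 2 * lam + C * lam ^ 2 := by
          refine add_le_add ?_ (hE n hn)
          rw [norm_mul, norm_mul, hz, hζ n hn, norm_mul, norm_mul, Complex.norm_two,
            Complex.norm_I, Complex.norm_real, Real.norm_eq_abs]
          nlinarith [hIm]
      _ ≤ (C + 2) * lam := by nlinarith [mul_nonneg (mul_nonneg hC.le hlam0) (sub_nonneg.mpr hlam1)]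
  -- telescoping
  have htel : ∀ M : ℕ, 1 ≤ M → ∑ n ∈ Icc 1 M, (ζ n - ζ (n+1)) = ζ 1 - ζ (M+1) := by
    intro M hM
    induction M with
    | zero => omega
    | succ m ih =>
      rcases Nat.eq_or_lt_of_le hM with h | h
      · simp [← h]
      · have hm : 1 ≤ m := by omega
        rw [Finset.sum_Icc_succ_top (by omega), ih hm]
        ring
  set S := ∑ n ∈ Icc 1 N, ζ n with hS
  have hkey : ‖1 - z‖ * ‖S‖ ≤ 2 + N * ((C + 2) * lam) := by
    have hsplit : (1 - z) * S
        = (ζ 1 - ζ (N+1)) + ∑ n ∈ Icc 1 N, (ζ (n+1) - z * ζ n) := by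
      rw [hS, Finset.mul_sum, ← htel N hN, ← Finset.sum_add_distrib]
      exact Finset.sum_congr rfl fun n _ => by ring
    have := congrArg (‖·‖) hsplit
    rw [norm_mul] at this
    rw [this]
    calc ‖(ζ 1 - ζ (N+1)) + ∑ n ∈ Icc 1 N, (ζ (n+1) - z * ζ n)‖
        ≤ ‖ζ 1 - ζ (N+1)‖
          + ‖∑ n ∈ Icc 1 N, (ζ (n+1) - z * ζ n)‖ := norm_add_le _ _
      _ ≤ 2 + N * ((C + 2) * lam) := by
          refine add_le_add ?_ ?_
          · calc ‖ζ 1 - ζ (N+1)‖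
                ≤ ‖ζ 1‖ + ‖ζ (N+1)‖ := by
                  exact norm_sub_le (ζ 1) (ζ (N+1))
              _ = 2 := by rw [hζ 1 le_rfl, hζ (N+1) (by omega)]; norm_num
          · calc ‖∑ n ∈ Icc 1 N, (ζ (n+1) - z * ζ n)‖
                ≤ ∑ n ∈ Icc 1 N, ‖ζ (n+1) - z * ζ n‖ :=
                  norm_sum_le _ _
              _ ≤ ∑ n ∈ Icc 1 N, ((C + 2) * lam) :=
                  Finset.sum_le_sum fun n hn =>
                    hstep n (Finset.mem_Icc.mp hn).1
              _ = N * ((C + 2) * lam) := by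
                  rw [Finset.sum_const, Nat.card_Icc]
                  simp [nsmul_eq_mul]
  -- finish
  rw [norm_mul, norm_div, norm_one, Complex.norm_natCast]
  have heq : (C + 2) * lam / ‖1 - z‖ + 3 / ((N:ℝ) * ‖1 - z‖)
      = ((N:ℝ) * ((C + 2) * lam) + 3) / ((N:ℝ) * ‖1 - z‖) := by
    field_simp
  rw [heq, one_div, inv_mul_eq_div, div_le_div_iff₀ hNpos (by positivity)]
  nlinarith [hkey, norm_nonneg S]
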